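/- Surjectivity of the moment map: Let Y be a finite set, a a strictly positive probability distribution on Y, and φ : Y → ℝ^d. For every μ in the interior of conv(φ(Y)), there exists λ* ∈ ℝ^d such that μ_{λ*} = μ, where μ_λ = Σ_y p_λ(y) φ(y). -/

import Mathlib

open Finset Real

noncomputable section

variable {d : ℕ} {Y : Type*} [Fintype Y]

/-- Dot product on `ℝ^d`. -/
def dotp (x y : Fin d → ℝ) : ℝ := ∑ i, x i * y i

/-- Partition function `Z_λ`. -/
def Zf (a : Y → ℝ) (φ : Y → Fin d → ℝ) (l : Fin d → ℝ) : ℝ :=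
  ∑ y, a y * Real.exp (dotp l (φ y))

/-- Log-partition function `A(λ)`. -/
def Af (a : Y → ℝ) (φ : Y → Fin d → ℝ) (l : Fin d → ℝ) : ℝ := Real.log (Zf a φ l)

/-- Exponential family member `p_λ`. -/
def pf (a : Y → ℝ) (φ : Y → Fin d → ℝ) (l : Fin d → ℝ) (y : Y) : ℝ :=
  a y * Real.exp (dotp l (φ y)) / Zf a φ l

/-- KL divergence on a finite set (convention `0 log 0 = 0` holds since `0 * x = 0`). -/
def KL (q p : Y → ℝ) : ℝ := ∑ y, q y * Real.log (q y / p y)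

/-- Mean of the sufficient statistic `μ_q`. -/
def mu (φ : Y → Fin d → ℝ) (q : Y → ℝ) : Fin d → ℝ := fun i => ∑ y, q y * φ y i

/-!
Take `λ*` to be a minimiser of the convex function `A(λ) - ⟨λ, μ⟩`, whose gradient is `μ_λ - μ`.
A minimiser exists because this function is coercive: if the closed `ε`-ball around `μ` lies in
`conv φ(Y)`, the point `μ + ε sign(λ)` of that ball lies below some vertex in direction `λ`,
so `⟨λ, φ y⟩ ≥ ⟨λ, μ⟩ + ε‖λ‖` and `A(λ) - ⟨λ, μ⟩ ≥ log a(y) + ε‖λ‖`.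
-/

open Filter

lemma dotp_eq_dotProduct (x y : Fin d → ℝ) : dotp x y = x ⬝ᵥ y := rfl

lemma dotp_mu (φ : Y → Fin d → ℝ) (q : Y → ℝ) (v : Fin d → ℝ) :
    dotp v (mu φ q) = ∑ y, q y * dotp v (φ y) := by
  simp only [dotp, mu, Finset.mul_sum]
  rw [Finset.sum_comm]
  exact Finset.sum_congr rfl fun _ _ => Finset.sum_congr rfl fun _ _ => by ring

lemma norm_le_dotp_sign (l : Fin d → ℝ) : ‖l‖ ≤ dotp l fun i => SignType.sign (l i) := by
  simp only [dotp, self_mul_sign]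
  refine (pi_norm_le_iff_of_nonneg (by positivity)).2 fun i => ?_
  exact Real.norm_eq_abs _ ▸
    Finset.single_le_sum (fun j _ => abs_nonneg (l j)) (Finset.mem_univ i)

lemma exists_dotp_ge_of_closedBall_subset {s : Set (Fin d → ℝ)} {μ : Fin d → ℝ} {ε : ℝ}
    (hε : 0 ≤ ε) (hball : Metric.closedBall μ ε ⊆ convexHull ℝ s) (l : Fin d → ℝ) :
    ∃ x ∈ s, dotp l μ + ε * ‖l‖ ≤ dotp l x := by
  set σ : Fin d → ℝ := fun i => SignType.sign (l i)
  have hσ : ‖σ‖ ≤ 1 := (pi_norm_le_iff_of_nonneg zero_le_one).2 fun i => by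
    rcases SignType.trichotomy (SignType.sign (l i)) with h | h | h <;> simp [σ, h]
  have hmem : μ + ε • σ ∈ convexHull ℝ s := hball <| by
    rw [Metric.mem_closedBall, dist_eq_norm, add_sub_cancel_left, norm_smul,
      Real.norm_of_nonneg hε]
    exact mul_le_of_le_one_right hε hσ
  obtain ⟨x, hx, hle⟩ :=
    ((dotProductBilin ℝ ℝ l).convexOn convex_univ).exists_ge_of_mem_convexHull
      (Set.subset_univ _) hmem
  refine ⟨x, hx, le_trans ?_ hle⟩
  have := mul_le_mul_of_nonneg_left (norm_le_dotp_sign l) hε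
  simp only [dotProductBilin_apply_apply, dotProduct_add, dotProduct_smul, smul_eq_mul,
    ← dotp_eq_dotProduct]
  linarith

section LogPartition

variable {a : Y → ℝ} (φ : Y → Fin d → ℝ)

lemma Zf_pos [Nonempty Y] (ha : ∀ y, 0 < a y) (l : Fin d → ℝ) : 0 < Zf a φ l :=
  Finset.sum_pos (fun y _ => mul_pos (ha y) (Real.exp_pos _)) Finset.univ_nonempty

lemma continuous_Af [Nonempty Y] (ha : ∀ y, 0 < a y) : Continuous (Af a φ) := by
  have hZ : Continuous (Zf a φ) := by unfold Zf dotp; fun_prop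
  exact hZ.log fun l => (Zf_pos φ ha l).ne'

lemma log_add_dotp_le_Af (ha : ∀ y, 0 < a y) (l : Fin d → ℝ) (y : Y) :
    Real.log (a y) + dotp l (φ y) ≤ Af a φ l := by
  have hterm : 0 < a y * Real.exp (dotp l (φ y)) := mul_pos (ha y) (Real.exp_pos _)
  rw [← Real.log_exp (dotp l (φ y)), ← Real.log_mul (ha y).ne' (Real.exp_pos _).ne']
  exact Real.log_le_log hterm <|
    Finset.single_le_sum (f := fun y => a y * Real.exp (dotp l (φ y)))
      (fun y _ => (mul_pos (ha y) (Real.exp_pos _)).le) (Finset.mem_univ y)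

lemma hasDerivAt_Af_line [Nonempty Y] (ha : ∀ y, 0 < a y) (l v : Fin d → ℝ) :
    HasDerivAt (fun t : ℝ => Af a φ (l + t • v)) (dotp v (mu φ (pf a φ l))) 0 := by
  have hZ : HasDerivAt (fun t : ℝ => Zf a φ (l + t • v))
      (∑ y, a y * (Real.exp (dotp l (φ y) + 0 * dotp v (φ y)) * dotp v (φ y))) 0 := by
    simp only [Zf, dotp_eq_dotProduct, add_dotProduct, smul_dotProduct, smul_eq_mul]
    exact HasDerivAt.fun_sum fun y _ =>
      ((((hasDerivAt_id (0 : ℝ)).mul_const _).const_add _).exp.const_mul (a y)).congr_deriv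
        (by simp)
  have hZl : Zf a φ (l + (0 : ℝ) • v) ≠ 0 := by simpa using (Zf_pos φ ha l).ne'
  refine (hZ.log hZl).congr_deriv ?_
  simp only [zero_mul, add_zero, zero_smul, dotp_mu, pf, Finset.sum_div]
  exact Finset.sum_congr rfl fun _ _ => by ring

lemma mu_pf_eq_of_forall_le [Nonempty Y] (ha : ∀ y, 0 < a y) {μ l : Fin d → ℝ}
    (hl : ∀ l', Af a φ l - dotp l μ ≤ Af a φ l' - dotp l' μ) : mu φ (pf a φ l) = μ := by
  funext i
  have hlin (v : Fin d → ℝ) :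
      HasDerivAt (fun t : ℝ => dotp (l + t • v) μ) (dotp v μ) 0 := by
    simp only [dotp_eq_dotProduct, add_dotProduct, smul_dotProduct, smul_eq_mul]
    exact ((hasDerivAt_id _).mul_const _).const_add _ |>.congr_deriv (one_mul _)
  set e : Fin d → ℝ := Pi.single i 1
  have hderiv := (hasDerivAt_Af_line φ ha l e).sub (hlin e)
  have hmin : IsLocalMin (fun t : ℝ => Af a φ (l + t • e) - dotp (l + t • e) μ) 0 :=
    Eventually.of_forall fun t => by simpa using hl _
  simpa [e, dotp_eq_dotProduct, sub_eq_zero] using hmin.hasDerivAt_eq_zero hderiv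

lemma tendsto_Af_sub_dotp_cocompact (ha : ∀ y, 0 < a y) {μ : Fin d → ℝ} {ε : ℝ}
    (hε : 0 < ε) (hball : Metric.closedBall μ ε ⊆ convexHull ℝ (Set.range φ)) :
    Tendsto (fun l => Af a φ l - dotp l μ) (cocompact _) atTop := by
  set c := ⨅ y, Real.log (a y)
  have hbound (l : Fin d → ℝ) : c + ε * ‖l‖ ≤ Af a φ l - dotp l μ := by
    obtain ⟨_, ⟨y, rfl⟩, hy⟩ := exists_dotp_ge_of_closedBall_subset hε.le hball l
    have := log_add_dotp_le_Af φ ha l y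
    have := ciInf_le (Set.finite_range fun y => Real.log (a y)).bddBelow y
    linarith
  exact tendsto_atTop_mono hbound <| tendsto_atTop_add_const_left _ c
    (tendsto_norm_cocompact_atTop.const_mul_atTop hε)

end LogPartition

theorem moment_map_surjective_general (a : Y → ℝ) (ha : ∀ y, 0 < a y)
    (φ : Y → Fin d → ℝ) (μ : Fin d → ℝ)
    (hμ : μ ∈ interior (convexHull ℝ (Set.range φ))) :
    ∃ l : Fin d → ℝ, mu φ (pf a φ l) = μ := by
  have : Nonempty Y :=
    Set.range_nonempty_iff_nonempty.1 (convexHull_nonempty_iff.1 ⟨μ, interior_subset hμ⟩)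
  obtain ⟨ε, hε, hball⟩ :=
    Metric.nhds_basis_closedBall.mem_iff.1 (mem_interior_iff_mem_nhds.1 hμ)
  obtain ⟨l, hl⟩ := ((continuous_Af φ ha).sub (by unfold dotp; fun_prop)).exists_forall_le
    (tendsto_Af_sub_dotp_cocompact φ ha hε hball)
  exact ⟨l, mu_pf_eq_of_forall_le φ ha hl⟩

theorem moment_map_surjective (a : Y → ℝ) (ha : ∀ y, 0 < a y) (ha1 : ∑ y, a y = 1)
    (φ : Y → Fin d → ℝ) (μ : Fin d → ℝ)
    (hμ : μ ∈ interior (convexHull ℝ (Set.range φ))) :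
    ∃ l : Fin d → ℝ, mu φ (pf a φ l) = μ :=
  moment_map_surjective_general a ha φ μ hμ
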